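/- arXiv:2211.09168 — 8 statements merged into one kernel-verified Lean document; each statement's English description precedes it below -/
import Mathlib

section
/- Let n ≥ 1 and let N be a commutative ℂ-subalgebra of Mat_n(ℂ) that is closed under conjugate transpose. Let N' = {x ∈ Mat_n(ℂ) : x·y = y·x for all y ∈ N} be the centralizer of N in Mat_n(ℂ). Then the center of N', namely Z(N') = {x ∈ N' : x·y = y·x for all y ∈ N'}, is equal to N. -/
/-!
A `⋆`-closed subalgebra `N` of matrices is a semisimple ring: its Jacobson radical is a
nilpotent ideal, so for `x` in it `xᴴ x` is a nilpotent Hermitian matrix, hence `0`, hence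
`x = 0`. The column space is then a semisimple `N`-module, and the Jacobson density theorem
says that every matrix commuting with the centralizer `N'` acts on it as an element of `N`,
i.e. `N'' = N`. Commutativity of `N` gives `N ⊆ N'`, so `Z(N') = N' ∩ N'' = N`.
-/

open Matrix
open scoped ComplexOrder

namespace Matrix

variable {𝕜 n : Type*} [RCLike 𝕜] [Fintype n] [DecidableEq n]

theorem IsHermitian.eq_zero_of_isNilpotent {A : Matrix n n 𝕜} (hA : A.IsHermitian)
    (hnil : IsNilpotent A) : A = 0 := by
  obtain ⟨k, hk⟩ := hnil
  suffices ∀ k, A ^ (k + 1) = 0 → A = 0 from this k (by rw [pow_succ, hk, zero_mul])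
  intro k
  induction k with
  | zero => simp
  | succ k ih =>
    intro hk
    refine ih (conjTranspose_mul_self_eq_zero.mp ?_)
    rw [conjTranspose_pow, hA.eq, ← pow_add, show k + 1 + (k + 1) = k + 2 + k by ring, pow_add,
      hk, zero_mul]

end Matrix

namespace Subalgebra

section RCLike

variable {𝕜 n : Type*} [RCLike 𝕜] [Fintype n] [DecidableEq n]

theorem isSemisimpleRing_of_conjTranspose_mem (N : Subalgebra 𝕜 (Matrix n n 𝕜))
    (hstar : ∀ y ∈ N, yᴴ ∈ N) : IsSemisimpleRing N := by
  have : IsArtinianRing N := IsArtinianRing.of_finite 𝕜 N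
  refine IsArtinianRing.isSemisimpleRing_iff_jacobson.mpr (eq_bot_iff.mpr fun x hx => ?_)
  obtain ⟨k, hk⟩ := IsSemiprimaryRing.isNilpotent (R := N)
  set y : N := ⟨(x : Matrix n n 𝕜)ᴴ, hstar x x.2⟩ * x
  have hyJ : y ∈ Ring.jacobson N := Ideal.mul_mem_left _ _ hx
  have hy : IsNilpotent y := ⟨k, by simpa [hk] using Ideal.pow_mem_pow hyJ k⟩
  have hy0 : (x : Matrix n n 𝕜)ᴴ * x = 0 :=
    (isHermitian_conjTranspose_mul_self _).eq_zero_of_isNilpotent (hy.map N.val)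
  exact (Submodule.mem_bot _).mpr (Subtype.ext (conjTranspose_mul_self_eq_zero.mp hy0))

end RCLike

section Field

variable {K n : Type*} [Field K] [Fintype n] [DecidableEq n]

theorem toMatrix'_mem_centralizer (A : Subalgebra K (Matrix n n K))
    (g : Module.End A (n → K)) :
    LinearMap.toMatrix' (g.restrictScalars K) ∈ centralizer K (A : Set (Matrix n n K)) := by
  refine (mem_centralizer_iff K).mpr fun a ha => ext_iff_mulVec.mpr fun v => ?_
  rw [← mulVec_mulVec, ← mulVec_mulVec, LinearMap.toMatrix'_mulVec, LinearMap.toMatrix'_mulVec]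
  exact (g.map_smul ⟨a, ha⟩ v).symm

theorem centralizer_centralizer_of_isSemisimpleModule (A : Subalgebra K (Matrix n n K))
    [IsSemisimpleModule A (n → K)] :
    centralizer K (centralizer K (A : Set (Matrix n n K)) : Set (Matrix n n K)) = A := by
  refine le_antisymm (fun x hx => ?_) (le_centralizer_centralizer K)
  have : Module.Finite (Module.End A (n → K)) (n → K) := .of_restrictScalars_finite K _ _
  let f : Module.End (Module.End A (n → K)) (n → K) :=
    { toFun := (x *ᵥ ·)
      map_add' := mulVec_add x
      map_smul' := fun g v => by
        have hg := (mem_centralizer_iff K).mp hx _ (toMatrix'_mem_centralizer A g)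
        simpa [← mulVec_mulVec] using (congrArg (· *ᵥ v) hg).symm }
  obtain ⟨r, hr⟩ := Module.Finite.toModuleEnd_moduleEnd_surjective f
  have hrx : (r : Matrix n n K) = x := ext_iff_mulVec.mpr fun v => LinearMap.congr_fun hr v
  exact hrx ▸ r.2

end Field

end Subalgebra

theorem center_of_commutant_eq_general (n : ℕ)
    (N : Subalgebra ℂ (Matrix (Fin n) (Fin n) ℂ))
    (hcomm : ∀ x ∈ N, ∀ y ∈ N, x * y = y * x)
    (hstar : ∀ y ∈ N, yᴴ ∈ N) :
    {x : Matrix (Fin n) (Fin n) ℂ |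
        x ∈ Subalgebra.centralizer ℂ (N : Set (Matrix (Fin n) (Fin n) ℂ)) ∧
        ∀ y ∈ Subalgebra.centralizer ℂ (N : Set (Matrix (Fin n) (Fin n) ℂ)),
          x * y = y * x} = (N : Set (Matrix (Fin n) (Fin n) ℂ)) := by
  have : IsSemisimpleRing N := N.isSemisimpleRing_of_conjTranspose_mem hstar
  have hN'' := N.centralizer_centralizer_of_isSemisimpleModule
  ext x
  refine ⟨fun ⟨_, hx⟩ => ?_, fun hx => ⟨?_, ?_⟩⟩
  · rw [SetLike.mem_coe, ← hN'', Subalgebra.mem_centralizer_iff]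
    exact fun y hy => (hx y hy).symm
  · exact (Subalgebra.mem_centralizer_iff ℂ).mpr fun y hy => hcomm y hy x hx
  · exact fun y hy => (Subalgebra.mem_centralizer_iff ℂ).mp hy x hx

/-- Let `N` be a commutative ℂ-subalgebra of `Mat_n(ℂ)` closed under
conjugate transpose, and `N'` its centralizer. Then the center of `N'`,
i.e. the elements of `N'` commuting with all of `N'`, equals `N`. -/
theorem center_of_commutant_eq (n : ℕ) (hn : 1 ≤ n)
    (N : Subalgebra ℂ (Matrix (Fin n) (Fin n) ℂ))
    (hcomm : ∀ x ∈ N, ∀ y ∈ N, x * y = y * x)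
    (hstar : ∀ y ∈ N, yᴴ ∈ N) :
    {x : Matrix (Fin n) (Fin n) ℂ |
        x ∈ Subalgebra.centralizer ℂ (N : Set (Matrix (Fin n) (Fin n) ℂ)) ∧
        ∀ y ∈ Subalgebra.centralizer ℂ (N : Set (Matrix (Fin n) (Fin n) ℂ)),
          x * y = y * x} = (N : Set (Matrix (Fin n) (Fin n) ℂ)) :=
  center_of_commutant_eq_general n N hcomm hstar
end

section
/- Let n ≥ 1 and let N be a commutative ℂ-subalgebra of Mat_n(ℂ) that is closed under conjugate transpose. Let N' be the centralizer of N in Mat_n(ℂ) and N'' the centralizer of N' in Mat_n(ℂ). Then N'' = N (finite-dimensional von Neumann bicommutant theorem in this setting). -/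
/-!
A ∗-closed subalgebra `A` of `End(E)`, `E` a finite-dimensional Hilbert space, acts semisimply on
`E`: the orthogonal complement of an `A`-invariant subspace is again `A`-invariant. For a
semisimple module the Jacobson density theorem identifies the operators commuting with every
`A`-linear endomorphism, i.e. the bicommutant `A''`, with `A` itself. Matrices are moved to
`End(ℂⁿ)` by the ∗-compatible algebra isomorphism `Matrix.toLpLinAlgEquiv 2`.
-/

open Matrix

namespace Subalgebra

theorem map_centralizer {R A B : Type*} [CommSemiring R] [Semiring A] [Algebra R A]
    [Semiring B] [Algebra R B] (e : A ≃ₐ[R] B) (s : Set A) :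
    (centralizer R s).map e.toAlgHom = centralizer R (e.toAlgHom '' s) := by
  ext y
  simp only [mem_map, mem_centralizer_iff, Set.forall_mem_image]
  constructor
  · rintro ⟨x, hx, rfl⟩ a ha
    simp [← map_mul, hx a ha]
  · intro h
    refine ⟨e.symm y, fun a ha => e.injective ?_, by simp⟩
    simpa using h ha

theorem centralizer_centralizer_eq_of_isSemisimpleModule {K E : Type*} [Field K] [AddCommGroup E]
    [Module K E] [FiniteDimensional K E] (A : Subalgebra K (Module.End K E))
    [IsSemisimpleModule A E] :
    centralizer K (centralizer K (A : Set (Module.End K E)) : Set (Module.End K E)) = A := by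
  refine le_antisymm (fun x hx => ?_) (le_centralizer_centralizer K)
  rw [mem_centralizer_iff] at hx
  have : Module.Finite (Module.End A E) E := .of_restrictScalars_finite K _ E
  -- `A`-linear maps are `K`-linear maps commuting with `A`, so `x` is `End_A(E)`-linear.
  let f : Module.End (Module.End A E) E :=
    { toFun := x
      map_add' := x.map_add
      map_smul' := fun g v => by
        have hg : (g.restrictScalars K : Module.End K E) ∈ centralizer K (A : Set _) :=
          fun a ha => LinearMap.ext fun w => (g.map_smul ⟨a, ha⟩ w).symm
        exact (LinearMap.congr_fun (hx _ hg) v).symm }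
  obtain ⟨r, hr⟩ := Module.Finite.toModuleEnd_moduleEnd_surjective f
  have hrx : (r : Module.End K E) = x := LinearMap.ext fun v => LinearMap.congr_fun hr v
  exact hrx ▸ r.2

section InnerProductSpace

variable {𝕜 E : Type*} [RCLike 𝕜] [NormedAddCommGroup E] [InnerProductSpace 𝕜 E]
  [FiniteDimensional 𝕜 E]

theorem isSemisimpleModule_of_star_mem (A : Subalgebra 𝕜 (Module.End 𝕜 E))
    (hA : ∀ a ∈ A, star a ∈ A) : IsSemisimpleModule A E := by
  refine (isSemisimpleModule_iff A E).2 ⟨fun p => ?_⟩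
  let q : Submodule A E :=
    { (p.restrictScalars 𝕜)ᗮ with
      smul_mem' := fun a v hv u hu => by
        change inner 𝕜 u ((a : Module.End 𝕜 E) v) = 0
        rw [← LinearMap.adjoint_inner_left]
        exact hv _ (p.smul_mem ⟨star (a : Module.End 𝕜 E), hA a a.2⟩ hu) }
  refine ⟨q, ?_⟩
  rw [← Submodule.isCompl_restrictScalars_iff 𝕜]
  exact (p.restrictScalars 𝕜).isCompl_orthogonal

theorem centralizer_centralizer_eq_of_star_mem (A : Subalgebra 𝕜 (Module.End 𝕜 E))
    (hA : ∀ a ∈ A, star a ∈ A) :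
    centralizer 𝕜 (centralizer 𝕜 (A : Set (Module.End 𝕜 E)) : Set (Module.End 𝕜 E)) = A :=
  have := isSemisimpleModule_of_star_mem A hA
  centralizer_centralizer_eq_of_isSemisimpleModule A

end InnerProductSpace

end Subalgebra

theorem Matrix.toLpLinAlgEquiv_conjTranspose {𝕜 n : Type*} [RCLike 𝕜] [Fintype n]
    [DecidableEq n] (A : Matrix n n 𝕜) : toLpLinAlgEquiv 2 Aᴴ = star (toLpLinAlgEquiv 2 A) :=
  toEuclideanLin_conjTranspose_eq_adjoint A

theorem bicommutant_eq_general (n : ℕ)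
    (N : Subalgebra ℂ (Matrix (Fin n) (Fin n) ℂ))
    (hstar : ∀ y ∈ N, yᴴ ∈ N) :
    Subalgebra.centralizer ℂ
      ((Subalgebra.centralizer ℂ (N : Set (Matrix (Fin n) (Fin n) ℂ)) :
          Subalgebra ℂ (Matrix (Fin n) (Fin n) ℂ)) :
        Set (Matrix (Fin n) (Fin n) ℂ)) = N := by
  let e : Matrix (Fin n) (Fin n) ℂ ≃ₐ[ℂ] Module.End ℂ (EuclideanSpace ℂ (Fin n)) :=
    toLpLinAlgEquiv 2
  have hN : ∀ a ∈ N.map e.toAlgHom, star a ∈ N.map e.toAlgHom := by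
    rintro _ ⟨y, hy, rfl⟩
    exact ⟨yᴴ, hstar y hy, toLpLinAlgEquiv_conjTranspose y⟩
  apply Subalgebra.map_injective (f := e.toAlgHom) e.injective
  rw [Subalgebra.map_centralizer, ← Subalgebra.coe_map, Subalgebra.map_centralizer,
    ← Subalgebra.coe_map]
  exact Subalgebra.centralizer_centralizer_eq_of_star_mem _ hN

/-- Finite-dimensional von Neumann bicommutant theorem: for a
commutative ℂ-subalgebra `N` of `Mat_n(ℂ)` closed under conjugate transpose,
the double centralizer `N''` equals `N`. -/
theorem bicommutant_eq (n : ℕ) (hn : 1 ≤ n)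
    (N : Subalgebra ℂ (Matrix (Fin n) (Fin n) ℂ))
    (hcomm : ∀ x ∈ N, ∀ y ∈ N, x * y = y * x)
    (hstar : ∀ y ∈ N, yᴴ ∈ N) :
    Subalgebra.centralizer ℂ
      ((Subalgebra.centralizer ℂ (N : Set (Matrix (Fin n) (Fin n) ℂ)) :
          Subalgebra ℂ (Matrix (Fin n) (Fin n) ℂ)) :
        Set (Matrix (Fin n) (Fin n) ℂ)) = N :=
  bicommutant_eq_general n N hstar
end

section
/- Let A be a nontrivial finite-dimensional associative unital ℂ-algebra. Then A is a simple ring (its only two-sided ideals are {0} and A) if and only if there exists n ≥ 1 and a ℂ-algebra isomorphism A ≅ Mat_n(ℂ). -/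
theorem simple_iff_matrix_algebra_general (A : Type*) [Ring A] [Algebra ℂ A]
    [FiniteDimensional ℂ A] :
    IsSimpleRing A ↔
      ∃ n : ℕ, 1 ≤ n ∧ Nonempty (A ≃ₐ[ℂ] Matrix (Fin n) (Fin n) ℂ) := by
  constructor
  · intro _
    obtain ⟨n, hn, e⟩ := IsSimpleRing.exists_algEquiv_matrix_of_isAlgClosed ℂ A
    exact ⟨n, Nat.one_le_iff_ne_zero.mpr hn.ne, e⟩
  · rintro ⟨n, hn, ⟨e⟩⟩
    have : Nonempty (Fin n) := ⟨⟨0, hn⟩⟩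
    exact .of_ringEquiv e.symm.toRingEquiv (IsSimpleRing.matrix (Fin n) ℂ)

/-- A nontrivial finite-dimensional associative unital ℂ-algebra is a
simple ring if and only if it is isomorphic, as a ℂ-algebra, to a matrix algebra
`Mat_n(ℂ)` for some `n ≥ 1`. -/
theorem simple_iff_matrix_algebra (A : Type*) [Ring A] [Algebra ℂ A]
    [FiniteDimensional ℂ A] [Nontrivial A] :
    IsSimpleRing A ↔
      ∃ n : ℕ, 1 ≤ n ∧ Nonempty (A ≃ₐ[ℂ] Matrix (Fin n) (Fin n) ℂ) :=
  simple_iff_matrix_algebra_general A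
end

section
/- Let A be a finite-dimensional associative unital ℂ-algebra equipped with an involution x ↦ x*, i.e., a map satisfying 1* = 1, (x*)* = x, (x·y)* = y*·x*, (x + y)* = x* + y*, and (λ·x)* = conj(λ)·x* for λ ∈ ℂ, which is positive in the sense that x ≠ 0 implies x*·x ≠ 0. Then A is a semisimple ring. -/
/-!
A finite-dimensional algebra is Artinian, so it is semisimple as soon as its Jacobson radical `J`
vanishes, and `J` is nilpotent. For `x ∈ J` the element `x* x` lies in `J`, hence is nilpotent,
and it is self-adjoint. A self-adjoint `a` with `a² = a* a = 0` vanishes by positivity, so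
repeated squaring shows that a nilpotent self-adjoint element is zero. Thus `x* x = 0`, i.e.
`x = 0`.
-/

section PositiveStar

variable {R : Type*}

theorem IsSelfAdjoint.eq_zero_of_isNilpotent [MonoidWithZero R] [StarMul R]
    (hpos : ∀ x : R, star x * x = 0 → x = 0) {a : R} (ha : IsSelfAdjoint a)
    (hnil : IsNilpotent a) : a = 0 := by
  obtain ⟨n, hn⟩ := hnil
  have pow_two_pow : ∀ k : ℕ, a ^ 2 ^ k = 0 → a = 0 := by
    intro k
    induction k with
    | zero => simp
    | succ k ih =>
      intro hk
      refine ih (hpos _ ?_)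
      rw [(ha.pow _).star_eq, ← pow_add, ← two_mul, ← pow_succ']
      exact hk
  exact pow_two_pow n (pow_eq_zero_of_le Nat.lt_two_pow_self.le hn)

theorem eq_zero_of_isNilpotent_star_mul_self [MonoidWithZero R] [StarMul R]
    (hpos : ∀ x : R, star x * x = 0 → x = 0) {x : R} (hx : IsNilpotent (star x * x)) :
    x = 0 :=
  hpos x ((IsSelfAdjoint.star_mul_self x).eq_zero_of_isNilpotent hpos hx)

theorem Ring.jacobson_eq_bot_of_star_mul_self_eq_zero [Ring R] [IsArtinianRing R] [StarMul R]
    (hpos : ∀ x : R, star x * x = 0 → x = 0) : Ring.jacobson R = ⊥ := by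
  obtain ⟨n, hn⟩ := IsSemiprimaryRing.isNilpotent (R := R)
  refine (Submodule.eq_bot_iff _).mpr fun x hx =>
    eq_zero_of_isNilpotent_star_mul_self hpos ⟨n, ?_⟩
  have := Ideal.pow_mem_pow ((Ring.jacobson R).mul_mem_left (star x) hx) n
  rwa [hn, Ideal.zero_eq_bot, Ideal.mem_bot] at this

theorem IsArtinianRing.isSemisimpleRing_of_star_mul_self_eq_zero [Ring R] [IsArtinianRing R]
    [StarMul R] (hpos : ∀ x : R, star x * x = 0 → x = 0) : IsSemisimpleRing R :=
  IsArtinianRing.isSemisimpleRing_iff_jacobson.mpr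
    (Ring.jacobson_eq_bot_of_star_mul_self_eq_zero hpos)

end PositiveStar

theorem semisimple_of_positive_involution_general (A : Type*) [Ring A] [Algebra ℂ A]
    [FiniteDimensional ℂ A] (star : A → A)
    (hinv : ∀ x, star (star x) = x)
    (hmul : ∀ x y, star (x * y) = star y * star x)
    (hpos : ∀ x : A, x ≠ 0 → star x * x ≠ 0) :
    IsSemisimpleRing A := by
  let _ : StarMul A := { star, star_involutive := hinv, star_mul := hmul }
  have : IsArtinianRing A := IsArtinianRing.of_finite ℂ A
  exact IsArtinianRing.isSemisimpleRing_of_star_mul_self_eq_zero fun x => not_imp_not.mp (hpos x)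

/-- A finite-dimensional associative unital ℂ-algebra equipped with a
positive involution is a semisimple ring. -/
theorem semisimple_of_positive_involution (A : Type*) [Ring A] [Algebra ℂ A]
    [FiniteDimensional ℂ A] (star : A → A)
    (h1 : star 1 = 1)
    (hinv : ∀ x, star (star x) = x)
    (hmul : ∀ x y, star (x * y) = star y * star x)
    (hadd : ∀ x y, star (x + y) = star x + star y)
    (hsmul : ∀ (l : ℂ) (x : A), star (l • x) = (starRingEnd ℂ l) • star x)
    (hpos : ∀ x : A, x ≠ 0 → star x * x ≠ 0) :
    IsSemisimpleRing A :=
  semisimple_of_positive_involution_general A star hinv hmul hpos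
end

section
/- For all natural numbers a, b, c, the number of triples of functions (f, g, h), with f : Fin (2a) → Fin 3, g : Fin (2b) → Fin 3, h : Fin (2c) → Fin 3, satisfying the three parity conditions #{j : g j = 2} ≡ #{k : h k = 1} (mod 2), #{k : h k = 2} ≡ #{i : f i = 1} (mod 2), and #{i : f i = 2} ≡ #{j : g j = 1} (mod 2), equals (9^{a+b+c} + 9^a + 9^b + 9^c + 4)/8; that is, 8 times this count equals 9^{a+b+c} + 9^a + 9^b + 9^c + 4. (This is the dimension of the joint +1 eigenspace of the three net operators Ψ^x, Ψ^y, Ψ^z in the block B_{000}, computed as D^{++}D^{++}D^{++} + cyclic sums of D^{−+}D^{+−}D^{++} and D^{+−}D^{−+}D^{−−} + D^{−−}D^{−−}D^{−−}.) -/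
/-!
Write `N(n; s, t)` for the number of words `f : Fin n → Fin 3` in which the numbers of 1's and
of 2's have parities `s` and `t`. Grouping the triples by these parities, the three cyclic
conditions make the count `∑_{p,q,r ∈ ZMod 2} N(2a; p, q) N(2b; q, r) N(2c; r, p)`.
Deleting the first letter gives `N(n+1; s, t) = N(n; s, t) + N(n; s-1, t) + N(n; s, t-1)`,
whose solution is `4 N(n; s, t) = 3ⁿ + (-1)ˢ + (-1)ᵗ + (-1)ⁿ⁺ˢ⁺ᵗ`. For `n = 2L` this is
`D^{++}_{2L} = (9^L + 3)/4` when `s = t = 0` and `(9^L - 1)/4` otherwise, and expanding the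
eight products gives the claimed value.
-/

open Finset

theorem card_cyclic_match_eq_sum {α β γ P Q R : Type*} [Fintype α] [Fintype β] [Fintype γ]
    [Fintype P] [Fintype Q] [Fintype R] [DecidableEq P] [DecidableEq Q] [DecidableEq R]
    (φ : α → P × Q) (ψ : β → Q × R) (χ : γ → R × P) :
    Fintype.card {x : α × β × γ //
        (ψ x.2.1).2 = (χ x.2.2).1 ∧ (χ x.2.2).2 = (φ x.1).1 ∧ (φ x.1).2 = (ψ x.2.1).1}
      = ∑ t : P × Q × R, Fintype.card {a // φ a = (t.1, t.2.1)} *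
          Fintype.card {b // ψ b = (t.2.1, t.2.2)} * Fintype.card {c // χ c = (t.2.2, t.1)} := by
  let S := {x : α × β × γ //
        (ψ x.2.1).2 = (χ x.2.2).1 ∧ (χ x.2.2).2 = (φ x.1).1 ∧ (φ x.1).2 = (ψ x.2.1).1}
  let π : S → P × Q × R := fun x => ((φ x.1.1).1, (φ x.1.1).2, (ψ x.1.2.1).2)
  let fiber (t : P × Q × R) : {x : S // π x = t} ≃
      {a // φ a = (t.1, t.2.1)} × {b // ψ b = (t.2.1, t.2.2)} × {c // χ c = (t.2.2, t.1)} :=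
    { toFun := fun x =>
        (⟨x.1.1.1, by obtain ⟨_, rfl⟩ := x; rfl⟩,
          ⟨x.1.1.2.1, by obtain ⟨⟨_, h⟩, rfl⟩ := x; exact Prod.ext h.2.2.symm rfl⟩,
          ⟨x.1.1.2.2, by obtain ⟨⟨_, h⟩, rfl⟩ := x; exact Prod.ext h.1.symm h.2.1⟩)
      invFun := fun ⟨⟨a, ha⟩, ⟨b, hb⟩, ⟨c, hc⟩⟩ =>
        ⟨⟨(a, b, c), by simp only [hb, hc], by simp only [hc, ha], by simp only [ha, hb]⟩,
          by simp only [π, ha, hb]⟩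
      left_inv := fun _ => rfl
      right_inv := fun _ => rfl }
  rw [← Fintype.card_congr (Equiv.sigmaFiberEquiv π), Fintype.card_sigma]
  refine Finset.sum_congr rfl fun t _ => ?_
  rw [Fintype.card_congr (fiber t), Fintype.card_prod, Fintype.card_prod, mul_assoc]

theorem card_subtype_fun_fin_succ {α : Type*} [Fintype α] {n : ℕ}
    (p : (Fin (n + 1) → α) → Prop) [DecidablePred p] :
    Fintype.card {f // p f} = ∑ x, Fintype.card {g : Fin n → α // p (Fin.cons x g)} := by
  rw [← Fintype.card_sigma]
  exact Fintype.card_congr <|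
    (Equiv.subtypeEquiv (Fin.consEquiv fun _ ↦ α).symm fun f ↦ by simp [Fin.consEquiv]).trans
      (Equiv.subtypeProdEquivSigmaSubtype fun x g ↦ p (Fin.cons x g))

def letterParities (x : Fin 3) : ZMod 2 × ZMod 2 :=
  (if x = 1 then 1 else 0, if x = 2 then 1 else 0)

def parities {n : ℕ} (f : Fin n → Fin 3) : ZMod 2 × ZMod 2 :=
  ∑ i, letterParities (f i)

theorem parities_eq {n : ℕ} (f : Fin n → Fin 3) :
    parities f = (((#{i | f i = 1} : ℕ) : ZMod 2), ((#{i | f i = 2} : ℕ) : ZMod 2)) := by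
  ext <;> simp [parities, letterParities, Prod.fst_sum, Prod.snd_sum, Finset.sum_boole]

theorem card_parities_succ (n : ℕ) (s t : ZMod 2) :
    Fintype.card {f : Fin (n + 1) → Fin 3 // parities f = (s, t)} =
      Fintype.card {g : Fin n → Fin 3 // parities g = (s, t)} +
        Fintype.card {g : Fin n → Fin 3 // parities g = (s - 1, t)} +
        Fintype.card {g : Fin n → Fin 3 // parities g = (s, t - 1)} := by
  have parities_cons (x : Fin 3) (g : Fin n → Fin 3) :
      parities (Fin.cons x g : Fin (n + 1) → Fin 3) = letterParities x + parities g :=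
    Fin.sum_univ_succ _
  rw [card_subtype_fun_fin_succ, Fin.sum_univ_three]
  simp [parities_cons, ← eq_sub_iff_add_eq', letterParities]

theorem four_mul_card_parities (n : ℕ) (s t : ZMod 2) :
    4 * (Fintype.card {f : Fin n → Fin 3 // parities f = (s, t)} : ℤ) =
      3 ^ n + (-1) ^ s.val + (-1) ^ t.val + (-1) ^ n * (-1) ^ s.val * (-1) ^ t.val := by
  induction n generalizing s t with
  | zero => revert s t; decide
  | succ n ih =>
    have sign_sub_one (r : ZMod 2) : (-1 : ℤ) ^ (r - 1).val = -(-1) ^ r.val := by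
      fin_cases r <;> rfl
    rw [card_parities_succ]
    push_cast
    have h₁ := ih (s - 1) t
    have h₂ := ih s (t - 1)
    rw [sign_sub_one] at h₁ h₂
    linear_combination ih s t + h₁ + h₂

theorem card_parities_two_mul (n : ℕ) (s t : ZMod 2) :
    (Fintype.card {f : Fin (2 * n) → Fin 3 // parities f = (s, t)} : ℚ) =
      (9 ^ n - 1) / 4 + if s = 0 ∧ t = 0 then 1 else 0 := by
  have h : 4 * (Fintype.card {f : Fin (2 * n) → Fin 3 // parities f = (s, t)} : ℚ) =
      9 ^ n + (-1) ^ s.val + (-1) ^ t.val + (-1) ^ s.val * (-1) ^ t.val := by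
    simpa [pow_mul] using (congrArg (Int.cast : ℤ → ℚ) (four_mul_card_parities (2 * n) s t))
  have zero_or_one : ∀ r : ZMod 2, r = 0 ∨ r = 1 := by decide
  rcases zero_or_one s with rfl | rfl <;> rcases zero_or_one t with rfl | rfl <;>
    simp only [ZMod.val_zero, ZMod.val_one, pow_zero, pow_one, one_ne_zero, and_self, and_true,
      and_false, reduceIte] at h ⊢ <;> linarith

/-- The number of triples of functions
`f : Fin (2a) → Fin 3`, `g : Fin (2b) → Fin 3`, `h : Fin (2c) → Fin 3`
satisfying the three cyclic parity conditions equals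
`(9^{a+b+c} + 9^a + 9^b + 9^c + 4)/8` (the dimension of the joint `+1` eigenspace
of the net operators `Ψ^x, Ψ^y, Ψ^z` in the block `B_{000}`). -/
theorem block000_eigenspace_dim (a b c : ℕ) :
    8 * Fintype.card {fgh : (Fin (2 * a) → Fin 3) × (Fin (2 * b) → Fin 3) ×
          (Fin (2 * c) → Fin 3) //
        (Finset.univ.filter (fun j => fgh.2.1 j = 2)).card % 2
          = (Finset.univ.filter (fun k => fgh.2.2 k = 1)).card % 2 ∧
        (Finset.univ.filter (fun k => fgh.2.2 k = 2)).card % 2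
          = (Finset.univ.filter (fun i => fgh.1 i = 1)).card % 2 ∧
        (Finset.univ.filter (fun i => fgh.1 i = 2)).card % 2
          = (Finset.univ.filter (fun j => fgh.2.1 j = 1)).card % 2}
      = 9 ^ (a + b + c) + 9 ^ a + 9 ^ b + 9 ^ c + 4 := by
  rw [Fintype.card_congr (Equiv.subtypeEquivRight fun x => by
      simp only [parities_eq, ZMod.natCast_eq_natCast_iff'] :
      _ ≃ {x : _ // (parities x.2.1).2 = (parities x.2.2).1 ∧
        (parities x.2.2).2 = (parities x.1).1 ∧ (parities x.1).2 = (parities x.2.1).1}),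
    card_cyclic_match_eq_sum]
  suffices h : 8 * ∑ t : ZMod 2 × ZMod 2 × ZMod 2,
      (Fintype.card {f : Fin (2 * a) → Fin 3 // parities f = (t.1, t.2.1)} : ℚ) *
        Fintype.card {g : Fin (2 * b) → Fin 3 // parities g = (t.2.1, t.2.2)} *
        Fintype.card {h : Fin (2 * c) → Fin 3 // parities h = (t.2.2, t.1)} =
      9 ^ (a + b + c) + 9 ^ a + 9 ^ b + 9 ^ c + 4 by exact_mod_cast h
  have univ_zmod_two : (univ : Finset (ZMod 2)) = {0, 1} := rfl
  simp only [card_parities_two_mul, Fintype.sum_prod_type, univ_zmod_two, sum_pair zero_ne_one,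
    one_ne_zero, and_true, true_and, and_false, false_and, reduceIte]
  ring
end

section
/- For all natural numbers a, b, the number of pairs of functions (f, g), with f : Fin (2a) → Fin 3 and g : Fin (2b) → Fin 3, such that #{i : f i = 1} is even, #{j : g j = 1} is even, and #{i : f i = 2} ≡ #{j : g j = 2} (mod 2), equals (9^{a+b} + 9^a + 9^b + 5)/8; that is, 8 times this count equals 9^{a+b} + 9^a + 9^b + 5. Equivalently, D^{++}_{2a}·D^{++}_{2b} + D^{+−}_{2a}·D^{+−}_{2b} = (9^{a+b} + 9^a + 9^b + 5)/8. -/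
def cnt (m p q : ℕ) : ℕ :=
  (Finset.univ.filter (fun f : Fin m → Fin 3 =>
    (Finset.univ.filter (fun i => f i = 1)).card % 2 = p ∧
    (Finset.univ.filter (fun i => f i = 2)).card % 2 = q)).card

lemma count_cons {m : ℕ} (x : Fin 3) (g : Fin m → Fin 3) (v : Fin 3) :
    (Finset.univ.filter (fun i => (Fin.cons x g : Fin (m+1) → Fin 3) i = v)).card
      = (if x = v then 1 else 0) + (Finset.univ.filter (fun i => g i = v)).card := by
  rw [Finset.card_filter, Fin.sum_univ_succ, Finset.card_filter]
  simp

lemma cnt_eq_sum (m p q : ℕ) :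
    cnt m p q = ∑ f : Fin m → Fin 3,
      if ((Finset.univ.filter (fun i => f i = 1)).card % 2 = p ∧
          (Finset.univ.filter (fun i => f i = 2)).card % 2 = q) then 1 else 0 :=
  Finset.card_filter _ _

lemma cnt_succ (m p q : ℕ) (hp : p < 2) (hq : q < 2) :
    cnt (m+1) p q = cnt m p q + cnt m (1-p) q + cnt m p (1-q) := by
  classical
  rw [cnt_eq_sum (m+1), cnt_eq_sum m p q, cnt_eq_sum m (1-p) q, cnt_eq_sum m p (1-q)]
  rw [← Equiv.sum_comp (Fin.consEquiv (fun _ : Fin (m+1) => Fin 3))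
    (fun f => if ((Finset.univ.filter (fun i => f i = 1)).card % 2 = p ∧
      (Finset.univ.filter (fun i => f i = 2)).card % 2 = q) then 1 else 0)]
  rw [Fintype.sum_prod_type, Fin.sum_univ_three]
  simp only [Fin.consEquiv_apply, count_cons,
    show (if (0:Fin 3) = 1 then 1 else 0) = 0 from rfl,
    show (if (0:Fin 3) = 2 then 1 else 0) = 0 from rfl,
    show (if (1:Fin 3) = 1 then 1 else 0) = 1 from rfl,
    show (if (1:Fin 3) = 2 then 1 else 0) = 0 from rfl,
    show (if (2:Fin 3) = 1 then 1 else 0) = 0 from rfl,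
    show (if (2:Fin 3) = 2 then 1 else 0) = 1 from rfl,
    if_true, ite_true, zero_add]
  refine congrArg₂ _ (congrArg₂ _ ?_ ?_) ?_ <;>
    exact Finset.sum_congr rfl fun g _ => if_congr (by omega) rfl rfl

lemma cnt_closed (a : ℕ) :
    4 * cnt (2*a) 0 0 = 9^a + 3 ∧ 4 * cnt (2*a) 0 1 + 1 = 9^a ∧
    4 * cnt (2*a) 1 0 + 1 = 9^a ∧ 4 * cnt (2*a) 1 1 + 1 = 9^a := by
  have h0 : (0:ℕ) < 2 := by norm_num
  have h1 : (1:ℕ) < 2 := by norm_num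
  induction a with
  | zero => norm_num; decide
  | succ n ih =>
    have e : 2 * (n + 1) = (2 * n + 1) + 1 := by ring
    rw [e]
    simp only [cnt_succ (2*n+1) 0 0 h0 h0, cnt_succ (2*n+1) 0 1 h0 h1,
      cnt_succ (2*n+1) 1 0 h1 h0, cnt_succ (2*n+1) 1 1 h1 h1, Nat.sub_zero, Nat.sub_self]
    simp only [cnt_succ (2*n) 0 0 h0 h0, cnt_succ (2*n) 0 1 h0 h1,
      cnt_succ (2*n) 1 0 h1 h0, cnt_succ (2*n) 1 1 h1 h1, Nat.sub_zero, Nat.sub_self]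
    rw [pow_succ]
    omega

/-- The number of pairs of functions `f : Fin (2a) → Fin 3`,
`g : Fin (2b) → Fin 3` with `#{i : f i = 1}` even, `#{j : g j = 1}` even, and
`#{i : f i = 2} ≡ #{j : g j = 2} (mod 2)` equals `(9^{a+b} + 9^a + 9^b + 5)/8`,
i.e. `D^{++}_{2a}·D^{++}_{2b} + D^{+-}_{2a}·D^{+-}_{2b}`. -/
theorem block001_eigenspace_dim (a b : ℕ) :
    8 * Fintype.card {fg : (Fin (2 * a) → Fin 3) × (Fin (2 * b) → Fin 3) //
        Even (Finset.univ.filter (fun i => fg.1 i = 1)).card ∧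
        Even (Finset.univ.filter (fun j => fg.2 j = 1)).card ∧
        (Finset.univ.filter (fun i => fg.1 i = 2)).card % 2
          = (Finset.univ.filter (fun j => fg.2 j = 2)).card % 2}
      = 9 ^ (a + b) + 9 ^ a + 9 ^ b + 5 := by
  classical
  rw [Fintype.card_subtype]
  have hsplit :
      (Finset.univ.filter (fun fg : (Fin (2*a) → Fin 3) × (Fin (2*b) → Fin 3) =>
        Even (Finset.univ.filter (fun i => fg.1 i = 1)).card ∧
        Even (Finset.univ.filter (fun j => fg.2 j = 1)).card ∧
        (Finset.univ.filter (fun i => fg.1 i = 2)).card % 2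
          = (Finset.univ.filter (fun j => fg.2 j = 2)).card % 2)) =
      ((Finset.univ.filter (fun f : Fin (2*a) → Fin 3 =>
          (Finset.univ.filter (fun i => f i = 1)).card % 2 = 0 ∧
          (Finset.univ.filter (fun i => f i = 2)).card % 2 = 0)) ×ˢ
       (Finset.univ.filter (fun g : Fin (2*b) → Fin 3 =>
          (Finset.univ.filter (fun j => g j = 1)).card % 2 = 0 ∧
          (Finset.univ.filter (fun j => g j = 2)).card % 2 = 0))) ∪
      ((Finset.univ.filter (fun f : Fin (2*a) → Fin 3 =>
          (Finset.univ.filter (fun i => f i = 1)).card % 2 = 0 ∧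
          (Finset.univ.filter (fun i => f i = 2)).card % 2 = 1)) ×ˢ
       (Finset.univ.filter (fun g : Fin (2*b) → Fin 3 =>
          (Finset.univ.filter (fun j => g j = 1)).card % 2 = 0 ∧
          (Finset.univ.filter (fun j => g j = 2)).card % 2 = 1))) := by
    ext ⟨f, g⟩
    simp only [Finset.mem_filter, Finset.mem_union, Finset.mem_product, Finset.mem_univ,
      true_and, Nat.even_iff]
    omega
  have hdisj : Disjoint
      ((Finset.univ.filter (fun f : Fin (2*a) → Fin 3 =>
          (Finset.univ.filter (fun i => f i = 1)).card % 2 = 0 ∧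
          (Finset.univ.filter (fun i => f i = 2)).card % 2 = 0)) ×ˢ
       (Finset.univ.filter (fun g : Fin (2*b) → Fin 3 =>
          (Finset.univ.filter (fun j => g j = 1)).card % 2 = 0 ∧
          (Finset.univ.filter (fun j => g j = 2)).card % 2 = 0)))
      ((Finset.univ.filter (fun f : Fin (2*a) → Fin 3 =>
          (Finset.univ.filter (fun i => f i = 1)).card % 2 = 0 ∧
          (Finset.univ.filter (fun i => f i = 2)).card % 2 = 1)) ×ˢ
       (Finset.univ.filter (fun g : Fin (2*b) → Fin 3 =>
          (Finset.univ.filter (fun j => g j = 1)).card % 2 = 0 ∧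
          (Finset.univ.filter (fun j => g j = 2)).card % 2 = 1))) := by
    simp only [Finset.disjoint_left, Finset.mem_product, Finset.mem_filter, Finset.mem_univ,
      true_and]
    rintro ⟨f, g⟩ ⟨⟨_, h1⟩, _⟩ ⟨⟨_, h2⟩, _⟩
    omega
  rw [hsplit, Finset.card_union_of_disjoint hdisj, Finset.card_product, Finset.card_product]
  show 8 * (cnt (2*a) 0 0 * cnt (2*b) 0 0 + cnt (2*a) 0 1 * cnt (2*b) 0 1) = _
  obtain ⟨hA, hB, -, -⟩ := cnt_closed a
  obtain ⟨hA', hB', -, -⟩ := cnt_closed b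
  rw [pow_add]
  have h1 : 16 * (cnt (2*a) 0 0 * cnt (2*b) 0 0) = (9^a + 3) * (9^b + 3) := by
    rw [← hA, ← hA']; ring
  have h2 : 16 * (cnt (2*a) 0 1 * cnt (2*b) 0 1) + 4 * cnt (2*a) 0 1 + 4 * cnt (2*b) 0 1 + 1
      = 9^a * 9^b := by
    rw [← hB, ← hB']; ring
  have h3 : (9^a + 3) * (9^b + 3) = 9^a * 9^b + 3 * 9^a + 3 * 9^b + 9 := by ring
  omega
end

section
/- Let P = diag(1, 1, −1, −1), D = diag(1, −1, 1, −1), and let S be the 4×4 complex matrix whose only nonzero entries are S_{12} = S_{21} = 2. Suppose E is a 4×4 complex matrix satisfying: (i) Eᴴ = E (E is Hermitian), (ii) (I + P)·E = S, (iii) E·D = −D·E, and (iv) E² = I. Then there exists θ ∈ ℝ such that E has entries E_{12} = E_{21} = 1, E_{34} = exp(iθ), E_{43} = exp(−iθ), and all other entries zero. -/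
open Matrix Complex ComplexConjugate

/-!
The projector `(1 + P) / 2` onto the first two coordinates turns the fusion condition into the
first two rows of `E`, and Hermiticity gives the first two columns. Anticommuting with
`D = diag(1, -1, 1, -1)` forces `E i j = 0` whenever `D i = D j`, which kills `E 2 2` and `E 3 3`.
What is left is the block `[[0, z], [conj z, 0]]`, and `E² = 1` says `z * conj z = 1`, i.e.
`z = exp(iθ)`.
-/

namespace Matrix

variable {n R : Type*} [Fintype n] [DecidableEq n]

theorem apply_eq_div_of_diagonal_mul_eq [Field R] {d : n → R} {E S : Matrix n n R}
    (h : diagonal d * E = S) {i : n} (hi : d i ≠ 0) (j : n) : E i j = S i j / d i := by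
  rw [← h, diagonal_mul, mul_div_cancel_left₀ _ hi]

theorem apply_eq_zero_of_mul_diagonal_eq_neg [CommRing R] [NoZeroDivisors R] {d : n → R}
    {E : Matrix n n R} (h : E * diagonal d = -(diagonal d * E)) {i j : n} (hij : d i + d j ≠ 0) :
    E i j = 0 := by
  have hij' := congrFun₂ h i j
  rw [mul_diagonal, neg_apply, diagonal_mul, eq_neg_iff_add_eq_zero] at hij'
  exact (mul_eq_zero.1 (by linear_combination hij')).resolve_left hij

end Matrix

theorem Complex.exists_exp_eq_of_mul_conj_eq_one {z : ℂ} (h : z * conj z = 1) :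
    ∃ θ : ℝ, exp (θ * I) = z := by
  rw [← norm_eq_one_iff]
  have hsq : ‖z‖ ^ 2 = 1 := by
    rw [← normSq_eq_norm_sq]
    exact_mod_cast (mul_conj z).symm.trans h
  exact (pow_eq_one_iff_of_nonneg (norm_nonneg z) two_ne_zero).1 hsq

/-- With `P = diag(1,1,-1,-1)`, `D = diag(1,-1,1,-1)` and `S` the
matrix with only nonzero entries `S₁₂ = S₂₁ = 2`, any Hermitian `E` with
`(I + P)·E = S`, `E·D = -D·E` and `E² = I` is of the stated form with entries
`E₁₂ = E₂₁ = 1`, `E₃₄ = exp(iθ)`, `E₄₃ = exp(-iθ)` for some real `θ`. -/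
theorem rho4_e_determined (E : Matrix (Fin 4) (Fin 4) ℂ)
    (hherm : Eᴴ = E)
    (hfusion : (1 + Matrix.diagonal ![1, 1, -1, -1]) * E
      = !![0, 2, 0, 0; 2, 0, 0, 0; 0, 0, 0, 0; 0, 0, 0, 0])
    (hbraid : E * Matrix.diagonal ![1, -1, 1, -1]
      = -(Matrix.diagonal ![1, -1, 1, -1] * E))
    (hsq : E * E = 1) :
    ∃ θ : ℝ, E = !![0, 1, 0, 0; 1, 0, 0, 0;
      0, 0, 0, Complex.exp (θ * Complex.I);
      0, 0, Complex.exp (-(θ : ℂ) * Complex.I), 0] := by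
  rw [← diagonal_one, diagonal_add] at hfusion
  have row0 := apply_eq_div_of_diagonal_mul_eq hfusion (i := 0) (by norm_num)
  have row1 := apply_eq_div_of_diagonal_mul_eq hfusion (i := 1) (by norm_num)
  have col (i j : Fin 4) : E j i = star (E i j) := (IsHermitian.apply hherm j i).symm
  have e22 : E 2 2 = 0 := apply_eq_zero_of_mul_diagonal_eq_neg hbraid (by simp)
  have e33 : E 3 3 = 0 := apply_eq_zero_of_mul_diagonal_eq_neg hbraid (by simp)
  have e20 : E 2 0 = 0 := by simp [col 0 2, row0]
  have e21 : E 2 1 = 0 := by simp [col 1 2, row1]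
  have e30 : E 3 0 = 0 := by simp [col 0 3, row0]
  have e31 : E 3 1 = 0 := by simp [col 1 3, row1]
  have hunit : E 2 3 * conj (E 2 3) = 1 := by
    have h22 := congrFun₂ hsq 2 2
    rw [mul_apply, Fin.sum_univ_four, e20, e21, e22, col 2 3] at h22
    simpa using h22
  obtain ⟨θ, hθ⟩ := exists_exp_eq_of_mul_conj_eq_one hunit
  refine ⟨θ, ?_⟩
  ext i j
  fin_cases i <;> fin_cases j <;>
    simp [row0, row1, e20, e21, e22, e30, e31, e33, col 2 3, ← hθ, ← exp_conj, one_add_one_eq_two]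
end

section
/- Let V be a ℂ-vector space with V ≠ 0 (possibly infinite dimensional). Then the tensor algebra T(V) = TensorAlgebra ℂ V is not a semisimple ring. -/
/-- For a nonzero ℂ-vector space `V` (possibly infinite dimensional),
the tensor algebra `T(V)` is not a semisimple ring. -/
theorem tensorAlgebra_not_semisimple (V : Type*) [AddCommGroup V] [Module ℂ V]
    [Nontrivial V] : ¬ IsSemisimpleRing (TensorAlgebra ℂ V) := by
  intro h
  obtain ⟨v, hv⟩ := exists_ne (0 : V)
  obtain ⟨φ, hφ⟩ : ∃ φ : Module.Dual ℂ V, φ v ≠ 0 := by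
    by_contra hc
    push_neg at hc
    exact hv ((Module.forall_dual_apply_eq_zero_iff ℂ v).mp hc)
  let g : V →ₗ[ℂ] Polynomial ℂ := φ.smulRight Polynomial.X
  let F := TensorAlgebra.lift ℂ g
  have hFX : F ((φ v)⁻¹ • TensorAlgebra.ι ℂ v) = Polynomial.X := by
    rw [map_smul, TensorAlgebra.lift_ι_apply]
    simp only [g, LinearMap.smulRight_apply, LinearMap.coe_mk]
    rw [smul_smul, inv_mul_cancel₀ hφ, one_smul]
  have hFsurj : Function.Surjective F := by
    have hrange : F.range = ⊤ := by
      rw [← top_le_iff, ← Polynomial.adjoin_X (R := ℂ)]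
      exact Algebra.adjoin_le (by simpa [Set.singleton_subset_iff] using ⟨_, hFX⟩)
    intro x
    have : x ∈ F.range := hrange ▸ Algebra.mem_top
    exact this
  have hss : IsSemisimpleRing (Polynomial ℂ) :=
    (F : TensorAlgebra ℂ V →+* Polynomial ℂ).isSemisimpleRing_of_surjective hFsurj
  haveI : (⊥ : Ideal (Polynomial ℂ)).IsPrime := Ideal.bot_prime
  have hmax : (⊥ : Ideal (Polynomial ℂ)).IsMaximal :=
    IsArtinianRing.isMaximal_of_isPrime ⊥
  refine Polynomial.not_isField ℂ ?_
  by_contra hnf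
  obtain ⟨I, hI1, hI2⟩ := Ring.not_isField_iff_exists_ideal_bot_lt_and_lt_top.mp hnf
  exact hI1.ne (hmax.eq_of_le hI2.ne hI1.le)
end
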